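/- Define F : [0,∞) × [0,∞) → ℝ by F(r,t) = 1 if r·e^{−t/2} ≤ 1; F(r,t) = 1 − e^{t/2} + e^{t}/r if 1 < r·e^{−t/2} ≤ (1 − e^{−t/2})^{−1}; and F(r,t) = 0 if r·e^{−t/2} > (1 − e^{−t/2})^{−1} (with the convention (1 − e^{−t/2})^{−1} = +∞ when t = 0). Then for every r ≥ 0, (3/π²)·∫_0^∞ F(r,t)·e^{−t} dt = Ψ_H(r). -/

import Mathlib

noncomputable section
open MeasureTheory Filter Topology

/-- The Hall density `Ψ_H` for the gap distribution of the Farey sequence. -/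
def PsiH (r : ℝ) : ℝ :=
  if r < 1 then 3 / Real.pi ^ 2
  else if r ≤ 4 then (3 / Real.pi ^ 2) * (-1 + 2 / r + (2 / r) * Real.log r)
  else (3 / Real.pi ^ 2) *
    (-1 + 2 / r + 2 * Real.sqrt (1 / 4 - 1 / r)
      - (4 / r) * Real.log (1 / 2 + Real.sqrt (1 / 4 - 1 / r)))

/-- The function `F(r,t)` of Section 6 (Eq. for `Ψ(r,t)` from [Marklof13, Eq. (30)]),
with the convention `(1 - e^{-t/2})⁻¹ = +∞` for `t = 0`. -/
def Frt (r t : ℝ) : ℝ :=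
  if r * Real.exp (-t / 2) ≤ 1 then 1
  else if t = 0 ∨ r * Real.exp (-t / 2) ≤ (1 - Real.exp (-t / 2))⁻¹ then
    1 - Real.exp (t / 2) + Real.exp t / r
  else 0

private lemma hasDerivAt_G (r t : ℝ) :
    HasDerivAt (fun t => -Real.exp (-t) + 2 * Real.exp (-t / 2) + t / r)
      (Real.exp (-t) - Real.exp (-t / 2) + 1 / r) t := by
  have h1 : HasDerivAt (fun t : ℝ => Real.exp (-t)) (-Real.exp (-t)) t := by
    simpa [Function.comp_def] using (Real.hasDerivAt_exp (-t)).comp t ((hasDerivAt_id t).neg)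
  have h2 : HasDerivAt (fun t : ℝ => Real.exp (-t / 2)) (Real.exp (-t / 2) * (-1 / 2)) t := by
    have := (Real.hasDerivAt_exp (-t / 2)).comp t (((hasDerivAt_id t).neg).div_const 2)
    simpa [Function.comp_def] using this
  have h3 : HasDerivAt (fun t : ℝ => t / r) (1 / r) t := by
    simpa using (hasDerivAt_id t).div_const r
  have := (h1.neg.add (h2.const_mul 2)).add h3
  refine this.congr_deriv ?_
  ring

private lemma integral_g (r : ℝ) {a b : ℝ} (hab : a ≤ b) :
    ∫ t in Set.Ioc a b, (Real.exp (-t) - Real.exp (-t / 2) + 1 / r) =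
      (-Real.exp (-b) + 2 * Real.exp (-b / 2) + b / r)
        - (-Real.exp (-a) + 2 * Real.exp (-a / 2) + a / r) := by
  rw [← intervalIntegral.integral_of_le hab]
  exact intervalIntegral.integral_eq_sub_of_hasDerivAt (fun t _ => hasDerivAt_G r t)
    (Continuous.intervalIntegrable (by continuity) a b)

private lemma Frt_one {r t : ℝ} (h : r * Real.exp (-t / 2) ≤ 1) : Frt r t = 1 := if_pos h

private lemma Frt_mid {r t : ℝ} (h1 : 1 < r * Real.exp (-t / 2))
    (h2 : r * Real.exp (-t / 2) * (1 - Real.exp (-t / 2)) ≤ 1) (ht : 0 < t) :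
    Frt r t * Real.exp (-t) = Real.exp (-t) - Real.exp (-t / 2) + 1 / r := by
  have hx1 : Real.exp (-t / 2) < 1 := by
    rw [Real.exp_lt_one_iff]; linarith
  have hx0 : (0:ℝ) < Real.exp (-t / 2) := Real.exp_pos _
  have hr0 : 0 < r := by nlinarith
  have hcond : r * Real.exp (-t / 2) ≤ (1 - Real.exp (-t / 2))⁻¹ := by
    rw [← one_div, le_div_iff₀ (by linarith)]; nlinarith
  rw [Frt, if_neg (not_le.mpr h1), if_pos (Or.inr hcond)]
  have e1 : Real.exp (t / 2) * Real.exp (-t) = Real.exp (-t / 2) := by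
    rw [← Real.exp_add]; ring_nf
  have e2 : Real.exp t * Real.exp (-t) = 1 := by
    rw [← Real.exp_add]; simp
  have : (1 - Real.exp (t / 2) + Real.exp t / r) * Real.exp (-t)
      = Real.exp (-t) - Real.exp (t / 2) * Real.exp (-t) + Real.exp t * Real.exp (-t) / r := by
    ring
  rw [this, e1, e2]

private lemma Frt_vanish {r t : ℝ} (h1 : 1 < r * Real.exp (-t / 2))
    (h2 : 1 < r * Real.exp (-t / 2) * (1 - Real.exp (-t / 2))) (ht : 0 < t) :
    Frt r t = 0 := by
  have hx1 : Real.exp (-t / 2) < 1 := by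
    rw [Real.exp_lt_one_iff]; linarith
  rw [Frt, if_neg (not_le.mpr h1), if_neg]
  push_neg
  refine ⟨ht.ne', ?_⟩
  rw [inv_lt_iff_one_lt_mul₀ (by linarith)]
  linarith [h2]

private lemma split_Ioi (f : ℝ → ℝ) {a b : ℝ} (hab : a ≤ b)
    (h1 : IntegrableOn f (Set.Ioc a b)) (h2 : IntegrableOn f (Set.Ioi b)) :
    ∫ t in Set.Ioi a, f t = (∫ t in Set.Ioc a b, f t) + ∫ t in Set.Ioi b, f t := by
  rw [← Set.Ioc_union_Ioi_eq_Ioi hab,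
    setIntegral_union (Set.Ioc_disjoint_Ioi le_rfl) measurableSet_Ioi h1 h2]

private lemma integral_piece {f g : ℝ → ℝ} {a b : ℝ} (hg : Continuous g)
    (h : Set.EqOn f g (Set.Ioo a b)) :
    IntegrableOn f (Set.Ioc a b) ∧ ∫ t in Set.Ioc a b, f t = ∫ t in Set.Ioc a b, g t := by
  constructor
  · rw [integrableOn_Ioc_iff_integrableOn_Ioo]
    exact ((hg.integrableOn_Ioc).mono_set Set.Ioo_subset_Ioc_self).congr_fun
      (fun x hx => (h hx).symm) measurableSet_Ioo
  · rw [integral_Ioc_eq_integral_Ioo, integral_Ioc_eq_integral_Ioo]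
    exact setIntegral_congr_fun measurableSet_Ioo h

private lemma integral_tail {f : ℝ → ℝ} {b : ℝ}
    (h : Set.EqOn f (fun t => Real.exp (-t)) (Set.Ioi b)) :
    IntegrableOn f (Set.Ioi b) ∧ ∫ t in Set.Ioi b, f t = Real.exp (-b) := by
  have hi : IntegrableOn (fun t => Real.exp (-t)) (Set.Ioi b) := by
    have := exp_neg_integrableOn_Ioi b (b := 1) one_pos
    simpa using this
  refine ⟨hi.congr_fun (fun x hx => (h hx).symm) measurableSet_Ioi, ?_⟩
  rw [setIntegral_congr_fun measurableSet_Ioi h, integral_exp_neg_Ioi]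

private lemma aux_one_lt {r x y z : ℝ} (hr : 0 < r) (hy0 : 0 < y) (hz0 : 0 < z) (hz1 : z < 1)
    (hprod : r * (y * z) = 1) (hxy : y ≤ x) : 1 < r * x := by
  have hry : 1 < r * y := by nlinarith
  nlinarith

private lemma aux_quad_le {r x xp xm : ℝ} (hr : 0 ≤ r) (hsum : xp + xm = 1)
    (hprod : r * (xp * xm) = 1) (h : 0 ≤ (x - xm) * (x - xp)) : r * x * (1 - x) ≤ 1 := by
  have hexp : r * ((x - xm) * (x - xp)) = r * (x * x) - r * x * (xp + xm) + r * (xp * xm) := by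
    ring
  rw [hsum, hprod, mul_one] at hexp
  linarith [mul_nonneg hr h]

private lemma aux_quad_gt {r x xp xm : ℝ} (hr : 0 < r) (hsum : xp + xm = 1)
    (hprod : r * (xp * xm) = 1) (h : 0 < (x - xm) * (xp - x)) : 1 < r * x * (1 - x) := by
  have hexp : r * ((x - xm) * (xp - x)) = r * x * (xp + xm) - r * (x * x) - r * (xp * xm) := by
    ring
  rw [hsum, hprod, mul_one] at hexp
  linarith [mul_pos hr h]

set_option maxHeartbeats 1000000 in
/-- Section 6, Eq. (6.5): integrating the section density over the height
yields Hall's distribution. -/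
theorem statement15 (r : ℝ) (hr : 0 ≤ r) :
    (3 / Real.pi ^ 2) * (∫ t in Set.Ioi (0:ℝ), Frt r t * Real.exp (-t)) = PsiH r := by
  rcases le_or_gt r 1 with h1 | h1
  · -- Case r ≤ 1 : Frt ≡ 1 on Ioi 0
    have heq : Set.EqOn (fun t => Frt r t * Real.exp (-t)) (fun t => Real.exp (-t))
        (Set.Ioi (0:ℝ)) := by
      intro t ht
      have hx : Real.exp (-t / 2) ≤ 1 := by
        rw [Real.exp_le_one_iff]
        simp only [Set.mem_Ioi] at ht
        linarith
      simp only
      rw [Frt_one (by nlinarith), one_mul]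
    rw [(integral_tail heq).2]
    simp only [neg_zero, Real.exp_zero]
    rcases lt_or_eq_of_le h1 with h | h
    · rw [PsiH, if_pos h, mul_one]
    · rw [PsiH, if_neg (by simp [h]), if_pos (by rw [h]; norm_num)]
      simp [h]
      norm_num
  rcases le_or_gt r 4 with h4 | h4
  · -- Case 1 < r ≤ 4
    have hr0 : (0:ℝ) < r := by linarith
    set T : ℝ := 2 * Real.log r with hTdef
    have hlog : 0 < Real.log r := Real.log_pos h1
    have hT : 0 < T := by positivity
    have heT2 : Real.exp (-T / 2) = r⁻¹ := by
      rw [show -T / 2 = -Real.log r by rw [hTdef]; ring, Real.exp_neg, Real.exp_log hr0]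
    have heT : Real.exp (-T) = (r ^ 2)⁻¹ := by
      rw [show -T = -(Real.log r) + -(Real.log r) by rw [hTdef]; ring, Real.exp_add,
        Real.exp_neg, Real.exp_log hr0, sq]
      rw [mul_inv]
    have hmid : Set.EqOn (fun t => Frt r t * Real.exp (-t))
        (fun t => Real.exp (-t) - Real.exp (-t / 2) + 1 / r) (Set.Ioo 0 T) := by
      intro t ht
      obtain ⟨ht0, htT⟩ := ht
      have hxgt : r⁻¹ < Real.exp (-t / 2) := by
        rw [← heT2]; exact Real.exp_lt_exp.mpr (by linarith)
      have hxlt : Real.exp (-t / 2) < 1 := by rw [Real.exp_lt_one_iff]; linarith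
      have hx0 : (0:ℝ) < Real.exp (-t / 2) := Real.exp_pos _
      have h1' : 1 < r * Real.exp (-t / 2) := by
        have := (mul_lt_mul_iff_right₀ hr0).mpr hxgt
        rwa [mul_inv_cancel₀ hr0.ne'] at this
      exact Frt_mid h1' (by nlinarith [sq_nonneg (2 * Real.exp (-t / 2) - 1)]) ht0
    have htail : Set.EqOn (fun t => Frt r t * Real.exp (-t)) (fun t => Real.exp (-t))
        (Set.Ioi T) := by
      intro t ht
      simp only [Set.mem_Ioi] at ht
      have hxlt : Real.exp (-t / 2) < r⁻¹ := by
        rw [← heT2]; exact Real.exp_lt_exp.mpr (by linarith)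
      have : r * Real.exp (-t / 2) ≤ 1 := by
        have := (mul_lt_mul_iff_right₀ hr0).mpr hxlt
        rw [mul_inv_cancel₀ hr0.ne'] at this
        linarith
      simp only
      rw [Frt_one this, one_mul]
    obtain ⟨hint1, hval1⟩ := integral_piece (f := fun t => Frt r t * Real.exp (-t))
      (by continuity) hmid
    obtain ⟨hint2, hval2⟩ := integral_tail htail
    rw [split_Ioi _ hT.le hint1 hint2, hval1, hval2, integral_g r hT.le, heT, heT2]
    rw [PsiH, if_neg (not_lt.mpr h1.le), if_pos h4]
    simp only [neg_zero, zero_div, Real.exp_zero, hTdef]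
    field_simp
    ring
  · -- Case 4 < r
    have hr0 : (0:ℝ) < r := by linarith
    have hsub : (0:ℝ) < 1 / 4 - 1 / r := by
      have : 1 / r < 1 / 4 := by
        rw [div_lt_div_iff₀ hr0 (by norm_num)]; linarith
      linarith
    set s : ℝ := Real.sqrt (1 / 4 - 1 / r) with hsdef
    have hs0 : 0 < s := by rw [hsdef]; exact Real.sqrt_pos.mpr hsub
    have hs2 : s ^ 2 = 1 / 4 - 1 / r := by rw [hsdef]; exact Real.sq_sqrt hsub.le
    have hinv : 0 < 1 / r := by positivity
    have hs12 : s < 1 / 2 := by nlinarith [sq_nonneg (s - 1 / 2)]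
    set xp : ℝ := 1 / 2 + s with hxpdef
    set xm : ℝ := 1 / 2 - s with hxmdef
    have hxm0 : 0 < xm := by rw [hxmdef]; linarith
    have hxp0 : 0 < xp := by rw [hxpdef]; linarith
    have hxp1 : xp < 1 := by rw [hxpdef]; linarith
    have hxm1 : xm < 1 := by rw [hxmdef]; linarith
    have hxmp : xm < xp := by rw [hxmdef, hxpdef]; linarith
    have hprod : r * (xp * xm) = 1 := by
      rw [hxpdef, hxmdef]
      have : (1 / 2 + s) * (1 / 2 - s) = 1 / 4 - s ^ 2 := by ring
      rw [this, hs2]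
      field_simp
      ring
    have hsum : xp + xm = 1 := by rw [hxpdef, hxmdef]; ring
    set t₁ : ℝ := -(2 * Real.log xp) with ht1def
    set t₂ : ℝ := -(2 * Real.log xm) with ht2def
    set T : ℝ := t₁ + t₂ with hTdef
    clear_value T t₂ t₁ xm xp s
    have ep2 : Real.exp (-t₁ / 2) = xp := by
      rw [show -t₁ / 2 = Real.log xp by rw [ht1def]; ring, Real.exp_log hxp0]
    have ep : Real.exp (-t₁) = xp ^ 2 := by
      rw [show -t₁ = Real.log xp + Real.log xp by rw [ht1def]; ring, Real.exp_add,
        Real.exp_log hxp0, sq]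
    have em2 : Real.exp (-t₂ / 2) = xm := by
      rw [show -t₂ / 2 = Real.log xm by rw [ht2def]; ring, Real.exp_log hxm0]
    have em : Real.exp (-t₂) = xm ^ 2 := by
      rw [show -t₂ = Real.log xm + Real.log xm by rw [ht2def]; ring, Real.exp_add,
        Real.exp_log hxm0, sq]
    have eT2 : Real.exp (-T / 2) = xp * xm := by
      rw [show -T / 2 = -t₁ / 2 + -t₂ / 2 by rw [hTdef]; ring, Real.exp_add, ep2, em2]
    have eT : Real.exp (-T) = xp ^ 2 * xm ^ 2 := by
      rw [show -T = -t₁ + -t₂ by rw [hTdef]; ring, Real.exp_add, ep, em]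
    have ht1 : 0 < t₁ := by
      have := Real.log_neg hxp0 hxp1
      rw [ht1def]; linarith
    have ht12 : t₁ ≤ t₂ := by
      have := Real.log_le_log hxm0 hxmp.le
      rw [ht1def, ht2def]; linarith
    have ht2T : t₂ ≤ T := by rw [hTdef]; linarith
    -- Piece 1 : (0, t₁), middle formula
    have hmid1 : Set.EqOn (fun t => Frt r t * Real.exp (-t))
        (fun t => Real.exp (-t) - Real.exp (-t / 2) + 1 / r) (Set.Ioo 0 t₁) := by
      intro t ht
      obtain ⟨ht0, htt⟩ := ht
      have hxgt : xp < Real.exp (-t / 2) := by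
        rw [← ep2]; exact Real.exp_lt_exp.mpr (by linarith)
      have hxlt : Real.exp (-t / 2) < 1 := by rw [Real.exp_lt_one_iff]; linarith
      have h1' : 1 < r * Real.exp (-t / 2) :=
        aux_one_lt hr0 hxp0 hxm0 hxm1 hprod (by linarith)
      have h2' : r * Real.exp (-t / 2) * (1 - Real.exp (-t / 2)) ≤ 1 :=
        aux_quad_le hr0.le hsum hprod
          (mul_nonneg (by linarith) (by linarith))
      exact Frt_mid h1' h2' ht0
    -- Piece 2 : (t₁, t₂), zero
    have hmid2 : Set.EqOn (fun t => Frt r t * Real.exp (-t))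
        (fun _ => (0:ℝ)) (Set.Ioo t₁ t₂) := by
      intro t ht
      obtain ⟨ht1', htt⟩ := ht
      have ht0 : 0 < t := lt_trans ht1 ht1'
      have hxgt : xm < Real.exp (-t / 2) := by
        rw [← em2]; exact Real.exp_lt_exp.mpr (by linarith)
      have hxlt : Real.exp (-t / 2) < xp := by
        rw [← ep2]; exact Real.exp_lt_exp.mpr (by linarith)
      have hprod' : r * (xm * xp) = 1 := by rw [mul_comm xm xp]; exact hprod
      have h1' : 1 < r * Real.exp (-t / 2) :=
        aux_one_lt hr0 hxm0 hxp0 hxp1 hprod' (by linarith)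
      have h2' : 1 < r * Real.exp (-t / 2) * (1 - Real.exp (-t / 2)) :=
        aux_quad_gt hr0 hsum hprod (mul_pos (by linarith) (by linarith))
      simp only
      rw [Frt_vanish h1' h2' ht0, zero_mul]
    -- Piece 3 : (t₂, T), middle formula
    have hmid3 : Set.EqOn (fun t => Frt r t * Real.exp (-t))
        (fun t => Real.exp (-t) - Real.exp (-t / 2) + 1 / r) (Set.Ioo t₂ T) := by
      intro t ht
      obtain ⟨ht2', htT⟩ := ht
      have ht0 : 0 < t := lt_trans (lt_of_lt_of_le ht1 ht12) ht2'
      have hxgt : xp * xm < Real.exp (-t / 2) := by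
        rw [← eT2]; exact Real.exp_lt_exp.mpr (by linarith)
      have hxlt : Real.exp (-t / 2) < xm := by
        rw [← em2]; exact Real.exp_lt_exp.mpr (by linarith)
      have h1' : 1 < r * Real.exp (-t / 2) := by
        have := mul_lt_mul_of_pos_left hxgt hr0
        linarith
      have h2' : r * Real.exp (-t / 2) * (1 - Real.exp (-t / 2)) ≤ 1 :=
        aux_quad_le hr0.le hsum hprod (by nlinarith [mul_nonneg (show (0:ℝ) ≤ xm - Real.exp (-t / 2) by linarith) (show (0:ℝ) ≤ xp - Real.exp (-t / 2) by linarith)])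
      exact Frt_mid h1' h2' ht0
    -- Tail : (T, ∞)
    have htail : Set.EqOn (fun t => Frt r t * Real.exp (-t)) (fun t => Real.exp (-t))
        (Set.Ioi T) := by
      intro t ht
      simp only [Set.mem_Ioi] at ht
      have hxlt : Real.exp (-t / 2) < xp * xm := by
        rw [← eT2]; exact Real.exp_lt_exp.mpr (by linarith)
      have : r * Real.exp (-t / 2) ≤ 1 := by
        have := mul_lt_mul_of_pos_left hxlt hr0
        linarith
      simp only
      rw [Frt_one this, one_mul]
    obtain ⟨hint1, hval1⟩ := integral_piece (f := fun t => Frt r t * Real.exp (-t))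
      (by continuity) hmid1
    obtain ⟨hint2, hval2⟩ := integral_piece (f := fun t => Frt r t * Real.exp (-t))
      continuous_const hmid2
    obtain ⟨hint3, hval3⟩ := integral_piece (f := fun t => Frt r t * Real.exp (-t))
      (by continuity) hmid3
    obtain ⟨hint4, hval4⟩ := integral_tail htail
    have hi2 : IntegrableOn (fun t => Frt r t * Real.exp (-t)) (Set.Ioi t₂) := by
      rw [← Set.Ioc_union_Ioi_eq_Ioi ht2T]; exact hint3.union hint4
    have hi1 : IntegrableOn (fun t => Frt r t * Real.exp (-t)) (Set.Ioi t₁) := by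
      rw [← Set.Ioc_union_Ioi_eq_Ioi ht12]; exact hint2.union hi2
    rw [split_Ioi _ ht1.le hint1 hi1, split_Ioi _ ht12 hint2 hi2,
      split_Ioi _ ht2T hint3 hint4, hval1, hval2, hval3, hval4,
      integral_g r ht1.le, integral_g r ht2T, ep, ep2, em, em2, eT, eT2]
    simp only [integral_zero, neg_zero, zero_div, Real.exp_zero]
    rw [PsiH, if_neg (by push_neg; linarith), if_neg (by push_neg; linarith), ← hsdef]
    rw [hTdef, ht1def, ht2def, hxpdef, hxmdef]
    have hlogm : Real.log (1 / 2 - s) = -(Real.log r + Real.log (1 / 2 + s)) := by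
      have h' : (1 / 2 - s) = (r * (1 / 2 + s))⁻¹ := by
        rw [hxpdef, hxmdef] at hprod
        field_simp
        nlinarith [hprod]
      rw [h', Real.log_inv, Real.log_mul hr0.ne' (by positivity)]
    rw [hlogm]
    field_simp
    have hrr : r * r⁻¹ = 1 := mul_inv_cancel₀ hr0.ne'
    linear_combination (-(32:ℝ) * r) * hs2 + (32:ℝ) * hrr
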